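/- arXiv:alg-geom/9611005 — 3 statements merged into one kernel-verified Lean document; each statement's English description precedes it below -/
import Mathlib

section
/- For real numbers x and c and every integer k ≥ 1, the integral over u from 0 to 1 of ((u·c + (1-u)·x)^{k-1} - x^{k-1})/u equals -H_{k-1}·x^{k-1} + ∑_{j=1}^{k-1} (c^j / j)·x^{k-1-j}. -/
open Finset intervalIntegral

lemma alg_id (n : ℕ) (x y : ℝ) :
    ∑ i ∈ range n, (n.choose (i+1) : ℝ)/(i+1) * y^(i+1) * x^(n-1-i) =
      -(harmonic n : ℝ) * x^n +
        ∑ i ∈ range n, (x+y)^(i+1)/(i+1) * x^(n-1-i) := by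
  induction n with
  | zero => simp
  | succ n ih =>
    have hsplit : ∑ i ∈ range (n+1), ((n+1).choose (i+1) : ℝ)/(i+1) * y^(i+1) * x^(n+1-1-i)
        = (∑ i ∈ range (n+1), (n.choose (i+1) : ℝ)/(i+1) * y^(i+1) * x^(n-i))
          + ∑ i ∈ range (n+1), (n.choose i : ℝ)/(i+1) * y^(i+1) * x^(n-i) := by
      rw [← Finset.sum_add_distrib]
      apply Finset.sum_congr rfl
      intro i hi
      rw [Nat.choose_succ_succ n i, show (n+1-1-i) = n - i from by omega]
      push_cast; ring
    have hsum1 : ∑ i ∈ range (n+1), (n.choose (i+1) : ℝ)/(i+1) * y^(i+1) * x^(n-i)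
        = x * ∑ i ∈ range n, (n.choose (i+1) : ℝ)/(i+1) * y^(i+1) * x^(n-1-i) := by
      rw [Finset.sum_range_succ, Nat.choose_succ_self, Finset.mul_sum]
      simp only [Nat.cast_zero, zero_div, zero_mul, add_zero]
      apply Finset.sum_congr rfl
      intro i hi
      have hi' : i < n := Finset.mem_range.mp hi
      rw [show n - i = (n-1-i)+1 from by omega, pow_succ]
      ring
    have hbin : ∑ i ∈ range (n+1), ((n+1).choose (i+1) : ℝ) * y^(i+1) * x^(n-i)
        = (y+x)^(n+1) - x^(n+1) := by
      have h := add_pow y x (n+1)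
      rw [Finset.sum_range_succ'] at h
      simp only [pow_zero, one_mul, Nat.choose_zero_right, Nat.cast_one, mul_one,
        Nat.sub_zero] at h
      rw [h, add_sub_cancel_right]
      apply Finset.sum_congr rfl
      intro i hi
      rw [show n + 1 - (i+1) = n - i from by omega]
      ring
    have hsum2 : ∑ i ∈ range (n+1), (n.choose i : ℝ)/(i+1) * y^(i+1) * x^(n-i)
        = ((y+x)^(n+1) - x^(n+1)) / (n+1) := by
      rw [← hbin, Finset.sum_div]
      apply Finset.sum_congr rfl
      intro i hi
      have h : ((n+1) : ℝ) * (n.choose i : ℝ) = ((n+1).choose (i+1) : ℝ) * (i+1) := by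
        have := Nat.add_one_mul_choose_eq n i
        exact_mod_cast congrArg (Nat.cast : ℕ → ℝ) this
      have hi1 : ((i:ℝ)+1) ≠ 0 := by positivity
      have hn1 : ((n:ℝ)+1) ≠ 0 := by positivity
      have hco : (n.choose i : ℝ)/((i:ℝ)+1) = ((n+1).choose (i+1) : ℝ)/((n:ℝ)+1) := by
        rw [div_eq_div_iff hi1 hn1]; push_cast at h ⊢; linarith
      rw [hco]; ring
    rw [hsplit, hsum1, hsum2, ih]
    have hRHS : ∑ i ∈ range (n+1), (x+y)^(i+1)/(i+1) * x^(n+1-1-i)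
        = x * (∑ i ∈ range n, (x+y)^(i+1)/(i+1) * x^(n-1-i)) + (x+y)^(n+1)/(n+1) := by
      rw [Finset.sum_range_succ, Finset.mul_sum, show (n+1-1-n) = 0 from by omega, pow_zero,
        mul_one]
      congr 1
      apply Finset.sum_congr rfl
      intro i hi
      have hi' : i < n := Finset.mem_range.mp hi
      rw [show n + 1 - 1 - i = (n-1-i)+1 from by omega, pow_succ]
      ring
    rw [hRHS, harmonic_succ]
    have hn1 : ((n:ℝ)+1) ≠ 0 := by positivity
    push_cast
    field_simp
    ring

theorem integral_deformation_power_sum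
    (x c : ℝ) (k : ℕ) (hk : 1 ≤ k) :
    ∫ u in (0:ℝ)..1, ((u * c + (1 - u) * x) ^ (k - 1) - x ^ (k - 1)) / u =
      -(harmonic (k - 1) : ℝ) * x ^ (k - 1) +
        ∑ j ∈ Finset.Icc 1 (k - 1), (c ^ j / (j : ℝ)) * x ^ (k - 1 - j) := by
  set n := k - 1 with hn
  -- Step 1: the integral equals a binomial sum
  have hint : (∫ u in (0:ℝ)..1, ((u * c + (1 - u) * x) ^ n - x ^ n) / u)
      = ∑ i ∈ range n, (n.choose (i+1) : ℝ)/(i+1) * (c-x)^(i+1) * x^(n-1-i) := by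
    have heq : ∀ u ∈ Set.Ioc (0:ℝ) 1,
        ((u * c + (1 - u) * x) ^ n - x ^ n) / u
          = ∑ i ∈ range n, (n.choose (i+1) : ℝ) * (c-x)^(i+1) * x^(n-1-i) * u^i := by
      intro u hu
      have hu0 : u ≠ 0 := ne_of_gt hu.1
      have hb : (u * c + (1 - u) * x) ^ n - x ^ n
          = ∑ i ∈ range n, (u*(c-x))^(i+1) * x^(n-(i+1)) * ((n.choose (i+1) : ℝ)) := by
        have : u * c + (1 - u) * x = u*(c-x) + x := by ring
        rw [this, add_pow, Finset.sum_range_succ']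
        simp
      rw [hb, Finset.sum_div]
      apply Finset.sum_congr rfl
      intro i hi
      rw [show n - (i+1) = n - 1 - i from by omega, mul_pow, pow_succ]
      field_simp
    rw [intervalIntegral.integral_congr_ae (g := fun u =>
        ∑ i ∈ range n, (n.choose (i+1) : ℝ) * (c-x)^(i+1) * x^(n-1-i) * u^i) ?_]
    · rw [intervalIntegral.integral_finset_sum]
      · apply Finset.sum_congr rfl
        intro i hi
        rw [intervalIntegral.integral_const_mul, integral_pow]
        simp
        ring
      · intro i hi
        apply Continuous.intervalIntegrable
        continuity
    · filter_upwards with u hu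
      have : u ∈ Set.Ioc (0:ℝ) 1 := by
        rwa [Set.uIoc_of_le (by norm_num : (0:ℝ) ≤ 1)] at hu
      exact heq u this
  rw [hint, alg_id n x (c - x), show x + (c - x) = c from by ring]
  congr 1
  rw [← Finset.Ico_add_one_right_eq_Icc, Finset.sum_Ico_eq_sum_range]
  apply Finset.sum_congr rfl
  intro i hi
  simp only [Finset.mem_range] at hi
  rw [show 1 + i = i + 1 from by omega, show n - (i+1) = n - 1 - i from by omega]
  push_cast
  ring
end

section
/- Let j, k, n be natural numbers with j ≤ k and k + 1 ≤ n. Then ∑_{i=j+1}^{k+1} C(n-i, k+1-i) · C(i-1, j) · H_{i-1} = C(n, k-j) · (H_n - H_{n-(k-j)} + H_j), as an identity of rational numbers. -/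
/-!
Write `k = j + m` and `n = j + (d + 1) + m`. The left side is then the convolution
`∑_{t + s = m} C(s + d, d) u(t)` of `u(t) = C(j + t, t) H_{j + t}` with a binomial kernel, and any
solution `Φ(a, m)` of Pascal's recurrence `Φ(a+1, m+1) = Φ(a, m+1) + Φ(a+1, m)` with constant
column `m = 0` satisfies `Φ(d + 1, m) = ∑_{t + s = m} C(s + d, d) Φ(0, t)`. The right side is
`Φ(d + 1, m)` for `Φ(a, m) = C(j + a + m, m) (H_{j + a + m} - H_{j + a} + H_j)`, whose row `a = 0`
is `u`; it obeys Pascal's recurrence because `C(N + 1, m + 1) / (N + 1) = C(N, m + 1) / (a + 1)`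
for `N = a + m + 1`, which is what the two new terms `1 / (N + 1)` and `1 / (a + 1)` of the
harmonic numbers require.
-/

open Finset

section Convolution

variable {M : Type*} [AddCommMonoid M]

lemma sum_antidiagonal_choose_succ_smul (u : ℕ → M) (d m : ℕ) :
    ∑ p ∈ antidiagonal (m + 1), (p.2 + (d + 1)).choose (d + 1) • u p.1 =
      ∑ p ∈ antidiagonal (m + 1), (p.2 + d).choose d • u p.1 +
        ∑ p ∈ antidiagonal m, (p.2 + (d + 1)).choose (d + 1) • u p.1 := by
  simp only [Nat.sum_antidiagonal_succ', zero_add, Nat.choose_self, one_smul]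
  rw [add_assoc, ← sum_add_distrib]
  congr 1
  refine sum_congr rfl fun p _ => ?_
  rw [← add_smul, show p.2 + 1 + (d + 1) = p.2 + 1 + d + 1 by ring, Nat.choose_succ_succ',
    show p.2 + 1 + d = p.2 + (d + 1) by ring]

theorem eq_sum_antidiagonal_choose_smul_of_pascal (Φ : ℕ → ℕ → M)
    (hpascal : ∀ a m, Φ (a + 1) (m + 1) = Φ a (m + 1) + Φ (a + 1) m)
    (hcol : ∀ a, Φ a 0 = Φ 0 0) (d m : ℕ) :
    Φ (d + 1) m = ∑ p ∈ antidiagonal m, (p.2 + d).choose d • Φ 0 p.1 := by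
  induction m generalizing d with
  | zero => simp [hcol]
  | succ m ihm =>
    induction d with
    | zero =>
      rw [hpascal, ihm, Nat.sum_antidiagonal_succ']
      simp
    | succ d ihd =>
      rw [hpascal, ihd, ihm, sum_antidiagonal_choose_succ_smul]

end Convolution

lemma choose_mul_harmonic_sub_add_pascal (c : ℚ) (a m : ℕ) :
    ((a + 1 + (m + 1)).choose (m + 1) : ℚ) * (harmonic (a + 1 + (m + 1)) - harmonic (a + 1) + c) =
      ((a + (m + 1)).choose (m + 1) : ℚ) * (harmonic (a + (m + 1)) - harmonic a + c) +
        ((a + 1 + m).choose m : ℚ) * (harmonic (a + 1 + m) - harmonic (a + 1) + c) := by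
  have hsymm : ((a + m + 1).choose m : ℚ) * (a + 1) = (a + m + 1).choose (m + 1) * (m + 1) := by
    have h := Nat.choose_succ_right_eq (a + m + 1) m
    rw [show a + m + 1 - m = a + 1 by omega] at h
    exact_mod_cast h.symm
  have hratio : (((a + m + 1).choose m + (a + m + 1).choose (m + 1) : ℕ) : ℚ) / (a + m + 2) =
      (a + m + 1).choose (m + 1) / (a + 1) := by
    rw [div_eq_div_iff (by positivity) (by positivity)]
    push_cast
    linear_combination hsymm
  rw [show a + 1 + (m + 1) = a + m + 1 + 1 by ring, show a + (m + 1) = a + m + 1 by ring,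
    show a + 1 + m = a + m + 1 by ring, Nat.choose_succ_succ, harmonic_succ (a + m + 1),
    harmonic_succ a]
  push_cast at hratio ⊢
  linear_combination hratio

theorem d_j_closed_form
    (j k n : ℕ) (hjk : j ≤ k) (hkn : k + 1 ≤ n) :
    ∑ i ∈ Finset.Icc (j + 1) (k + 1),
        (Nat.choose (n - i) (k + 1 - i) : ℚ) * (Nat.choose (i - 1) j : ℚ) *
          harmonic (i - 1) =
      (Nat.choose n (k - j) : ℚ) *
        (harmonic n - harmonic (n - (k - j)) + harmonic j) := by
  obtain ⟨m, rfl⟩ : ∃ m, k = j + m := ⟨k - j, by omega⟩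
  obtain ⟨d, rfl⟩ : ∃ d, n = j + (d + 1) + m := ⟨n - (j + m + 1), by omega⟩
  set Φ : ℕ → ℕ → ℚ := fun a m =>
    ((j + a + m).choose m : ℚ) * (harmonic (j + a + m) - harmonic (j + a) + harmonic j)
  have hreindex : ∑ i ∈ Icc (j + 1) (j + m + 1),
      ((j + (d + 1) + m - i).choose (j + m + 1 - i) : ℚ) * ((i - 1).choose j : ℚ) *
        harmonic (i - 1) = ∑ p ∈ antidiagonal m, (p.2 + d).choose d • Φ 0 p.1 := by
    rw [← Ico_add_one_right_eq_Icc, sum_Ico_eq_sum_range, Nat.sum_antidiagonal_eq_sum_range_succ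
      (fun t s => (s + d).choose d • Φ 0 t)]
    refine sum_congr (by congr 1; omega) fun t hmem => ?_
    have ht : t ≤ m := Nat.lt_succ_iff.mp (mem_range.mp hmem)
    rw [show j + (d + 1) + m - (j + 1 + t) = m - t + d by omega,
      show j + m + 1 - (j + 1 + t) = m - t by omega, show j + 1 + t - 1 = j + t by omega,
      nsmul_eq_mul, Nat.choose_symm_add, Nat.choose_symm_add]
    simp only [Φ, add_zero, sub_add_cancel]
    ring
  rw [hreindex, Nat.add_sub_cancel_left, Nat.add_sub_cancel]
  exact (eq_sum_antidiagonal_choose_smul_of_pascal Φ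
    (fun a m => choose_mul_harmonic_sub_add_pascal (harmonic j) (j + a) m) (by simp [Φ]) d m).symm
end

section
/- Let n and s be natural numbers with n ≥ s ≥ 1. Then ∑_{i=0}^{s} (-1)^{i+1} · (n! / (i! · (s-i)! · (n-s)!)) · H_{n-s+i} = 1/s, as an identity of rational numbers. -/
open Finset

lemma harmonic_alt_sum (s : ℕ) (hs : 1 ≤ s) : ∀ m : ℕ,
    ∑ i ∈ Finset.range (s + 1), (-1 : ℚ) ^ (i + 1) * (s.choose i : ℚ) * harmonic (m + i)
      = (Nat.factorial (s - 1) : ℚ) * (Nat.factorial m) / (Nat.factorial (m + s)) := by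
  induction s with
  | zero => omega
  | succ s ih =>
    intro m
    rcases Nat.eq_zero_or_pos s with rfl | hs'
    · simp [Finset.sum_range_succ, harmonic_succ]
      rw [Nat.factorial_succ]
      push_cast
      have h0 : ((m:ℚ)+1) ≠ 0 := by positivity
      have h1 : (Nat.factorial m : ℚ) ≠ 0 := Nat.cast_ne_zero.2 (Nat.factorial_ne_zero _)
      field_simp
    have key : ∑ i ∈ Finset.range (s + 2), (-1 : ℚ) ^ (i + 1) * ((s+1).choose i : ℚ) * harmonic (m + i)
        = (∑ i ∈ Finset.range (s + 1), (-1 : ℚ) ^ (i + 1) * (s.choose i : ℚ) * harmonic (m + i))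
          - (∑ i ∈ Finset.range (s + 1), (-1 : ℚ) ^ (i + 1) * (s.choose i : ℚ) * harmonic ((m+1) + i)) := by
      rw [Finset.sum_range_succ' (fun i => (-1 : ℚ) ^ (i + 1) * ((s+1).choose i : ℚ) * harmonic (m + i))]
      have e1 : ∀ i ∈ Finset.range (s+1),
          (-1 : ℚ) ^ (i + 1 + 1) * (((s+1).choose (i+1)) : ℚ) * harmonic (m + (i+1))
          = -((-1 : ℚ) ^ (i + 1) * (s.choose i : ℚ) * harmonic ((m+1) + i))
            + ((-1 : ℚ) ^ ((i+1) + 1) * (s.choose (i+1) : ℚ) * harmonic (m + (i+1))) := by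
        intro i _
        rw [Nat.choose_succ_succ]
        push_cast
        have : m + (i + 1) = (m + 1) + i := by omega
        rw [this]
        ring
      rw [Finset.sum_congr rfl e1, Finset.sum_add_distrib]
      have e2 : ∑ i ∈ Finset.range (s+1), ((-1 : ℚ) ^ ((i+1) + 1) * (s.choose (i+1) : ℚ) * harmonic (m + (i+1)))
          = (∑ i ∈ Finset.range (s + 1), (-1 : ℚ) ^ (i + 1) * (s.choose i : ℚ) * harmonic (m + i))
            - ((-1 : ℚ) ^ (0 + 1) * (s.choose 0 : ℚ) * harmonic (m + 0)) := by
        have t := Finset.sum_range_succ' (fun j => (-1 : ℚ) ^ (j + 1) * (s.choose j : ℚ) * harmonic (m + j)) (s+1)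
        rw [Finset.sum_range_succ] at t
        simp only [Nat.choose_succ_self, Nat.cast_zero, mul_zero, zero_mul, add_zero] at t
        rw [eq_sub_iff_add_eq]
        simp only [Nat.add_zero]
        linarith [t]
      rw [e2, Finset.sum_neg_distrib]
      simp only [Nat.choose_zero_right, Nat.cast_one]
      ring
    rw [key, ih hs' m, ih hs' (m+1)]
    have h1 : s + 1 - 1 = s := by omega
    have h2 : s - 1 + 1 = s := by omega
    rw [h1]
    have hfs : (Nat.factorial s : ℚ) = s * (s-1).factorial := by
      rw [← h2, Nat.factorial_succ]; push_cast [h2]; ring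
    have hf1 : (Nat.factorial (m + (s+1)) : ℚ) = (m + s + 1) * (m + s).factorial := by
      rw [show m + (s+1) = (m + s) + 1 by omega, Nat.factorial_succ]; push_cast; ring
    have hf2 : (Nat.factorial (m+1) : ℚ) = (m + 1) * m.factorial := by
      rw [Nat.factorial_succ]; push_cast; ring
    have hf3 : (Nat.factorial (m + 1 + s) : ℚ) = (m + s + 1) * (m + s).factorial := by
      rw [show m + 1 + s = (m + s) + 1 by omega, Nat.factorial_succ]; push_cast; ring
    rw [hfs, hf1, hf2, hf3]
    have p1 : (Nat.factorial (m+s) : ℚ) ≠ 0 := Nat.cast_ne_zero.2 (Nat.factorial_ne_zero _)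
    have p2 : (m : ℚ) + s + 1 ≠ 0 := by positivity
    field_simp
    ring

theorem trinomial_harmonic_identity
    (n s : ℕ) (hs : 1 ≤ s) (hn : s ≤ n) :
    ∑ i ∈ Finset.range (s + 1),
        (-1 : ℚ) ^ (i + 1) *
          ((Nat.factorial n : ℚ) /
            ((Nat.factorial i : ℚ) * (Nat.factorial (s - i) : ℚ) *
              (Nat.factorial (n - s) : ℚ))) * harmonic (n - s + i) =
      1 / (s : ℚ) := by
  have hc : ∀ i ∈ Finset.range (s+1),
      (-1 : ℚ) ^ (i + 1) * ((Nat.factorial n : ℚ) /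
        ((Nat.factorial i : ℚ) * (Nat.factorial (s - i) : ℚ) * (Nat.factorial (n - s) : ℚ)))
        * harmonic (n - s + i)
      = (n.choose s : ℚ) * ((-1 : ℚ) ^ (i + 1) * (s.choose i : ℚ) * harmonic (n - s + i)) := by
    intro i hi
    have hi' : i ≤ s := by simp at hi; omega
    have e1 : (s.choose i) * i.factorial * (s - i).factorial = s.factorial :=
      Nat.choose_mul_factorial_mul_factorial hi'
    have e2 : (n.choose s) * s.factorial * (n - s).factorial = n.factorial :=
      Nat.choose_mul_factorial_mul_factorial hn
    have hfact : (Nat.factorial n : ℚ) = (n.choose s : ℚ) * (s.choose i : ℚ) *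
        ((Nat.factorial i : ℚ) * (Nat.factorial (s - i) : ℚ) * (Nat.factorial (n - s) : ℚ)) := by
      rw [← e2, ← e1]; push_cast; ring
    rw [hfact]
    have p : (Nat.factorial i : ℚ) * (Nat.factorial (s - i) : ℚ) * (Nat.factorial (n - s) : ℚ) ≠ 0 := by
      positivity
    field_simp
  rw [Finset.sum_congr rfl hc, ← Finset.mul_sum, harmonic_alt_sum s hs (n - s)]
  have hns : n - s + s = n := by omega
  rw [hns]
  have e2 : (n.choose s) * s.factorial * (n - s).factorial = n.factorial :=
    Nat.choose_mul_factorial_mul_factorial hn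
  have hfs : (Nat.factorial s : ℚ) = s * (s-1).factorial := by
    rw [show s = (s-1) + 1 by omega, Nat.factorial_succ]
    push_cast [show s - 1 + 1 = s by omega]; ring
  have hn' : (Nat.factorial n : ℚ) = (n.choose s : ℚ) * ((s:ℚ) * (s-1).factorial) * (n-s).factorial := by
    rw [← hfs, ← e2]; push_cast; ring
  have p1 : (Nat.factorial n : ℚ) ≠ 0 := Nat.cast_ne_zero.2 (Nat.factorial_ne_zero _)
  have ps : (s : ℚ) ≠ 0 := by positivity
  have pf : ((s-1).factorial : ℚ) ≠ 0 := Nat.cast_ne_zero.2 (Nat.factorial_ne_zero _)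
  have pns : ((n-s).factorial : ℚ) ≠ 0 := Nat.cast_ne_zero.2 (Nat.factorial_ne_zero _)
  have pc : (n.choose s : ℚ) ≠ 0 := by
    exact_mod_cast Nat.cast_ne_zero.2 (Nat.choose_pos hn).ne'
  rw [hn'] at p1 ⊢
  field_simp
end
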